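/- arXiv:2203.13101 — 2 statements merged into one kernel-verified Lean document; each statement's English description precedes it below -/
import Mathlib

section
/- Let 0 < α < 1, T > 0 and let f : [0,T] → ℝ be continuously differentiable. Then for every t ∈ (0,T] one has the pointwise inequality f(t) · ᶜD^α_t f(t) ≥ (1/2) ᶜD^α_t (f²)(t); equivalently, since (f²)'(s) = 2 f(s) f'(s), f(t) · ∫₀^t f'(s)(t−s)^{−α} ds ≥ ∫₀^t f(s) f'(s)(t−s)^{−α} ds. -/
/-!
Put `u = f - f t` and `w s = (t - s) ^ (-α)`. The claim is `∫₀ᵗ u u' w ≤ 0`. On `[0, x]` with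
`x < t` the weight `w` is smooth, nonnegative and nondecreasing, so integrating `(u² / 2)' w` by
parts gives `∫₀ˣ u u' w ≤ u(x)² w(x) / 2`. Since `u(x) = O(t - x)`, the right-hand side is
`O((t - x) ^ (2 - α))` and tends to `0` as `x → t⁻`, while the left-hand side tends to `∫₀ᵗ u u' w`
because `w` is integrable for `α < 1`.
-/

open intervalIntegral Set Filter Topology MeasureTheory
open scoped Interval

theorem intervalIntegrable_const_sub_rpow {r : ℝ} (hr : -1 < r) (c a b : ℝ) :
    IntervalIntegrable (fun x => (c - x) ^ r) volume a b := by
  simpa using (intervalIntegrable_rpow' hr (a := c - a) (b := c - b)).comp_sub_left c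

theorem integral_mul_deriv_mul_le_of_deriv_nonneg {u u' w w' : ℝ → ℝ} {a b : ℝ} (hab : a ≤ b)
    (hu : ∀ x ∈ Icc a b, HasDerivWithinAt u (u' x) (Icc a b) x)
    (hu' : IntervalIntegrable u' volume a b)
    (hw : ∀ x ∈ Icc a b, HasDerivWithinAt w (w' x) (Icc a b) x)
    (hw' : IntervalIntegrable w' volume a b) (hwa : 0 ≤ w a) (hw'_nonneg : ∀ x ∈ Icc a b, 0 ≤ w' x) :
    ∫ x in a..b, u x * u' x * w x ≤ u b ^ 2 * w b / 2 := by
  rw [← uIcc_of_le hab] at hu hw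
  have hsq : ∀ x ∈ [[a, b]], HasDerivWithinAt (fun y => u y ^ 2 / 2) (u x * u' x) [[a, b]] x :=
    fun x hx => (((hu x hx).pow 2).div_const 2).congr_deriv (by ring)
  have hibp := integral_mul_deriv_eq_deriv_mul_of_hasDerivWithinAt hw hsq hw'
    (hu'.continuousOn_mul fun x hx => (hu x hx).continuousWithinAt)
  have hrest : 0 ≤ ∫ x in a..b, w' x * (u x ^ 2 / 2) :=
    integral_nonneg hab fun x hx => mul_nonneg (hw'_nonneg x hx) (by positivity)
  have hfirst : 0 ≤ w a * (u a ^ 2 / 2) := mul_nonneg hwa (by positivity)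
  calc ∫ x in a..b, u x * u' x * w x = ∫ x in a..b, w x * (u x * u' x) :=
        integral_congr fun x _ => by ring
    _ ≤ u b ^ 2 * w b / 2 := by rw [hibp]; linarith

theorem tendsto_sq_sub_mul_rpow_nhdsLT {f : ℝ → ℝ} {d t r : ℝ}
    (hf : HasDerivWithinAt f d (Iic t) t) (hr : -2 < r) :
    Tendsto (fun x => (f x - f t) ^ 2 * (t - x) ^ r) (𝓝[<] t) (𝓝 0) := by
  have hslope : Tendsto (slope f t) (𝓝[<] t) (𝓝 d) := by
    simpa using hasDerivWithinAt_iff_tendsto_slope.mp hf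
  have hpow : Tendsto (fun x => (t - x) ^ (2 + r)) (𝓝[<] t) (𝓝 0) := by
    have : ContinuousAt (fun x : ℝ => (t - x) ^ (2 + r)) t :=
      (continuousAt_const.sub continuousAt_id).rpow_const (Or.inr (by linarith))
    simpa [Real.zero_rpow (by linarith : (2 + r) ≠ 0)] using
      this.tendsto.mono_left nhdsWithin_le_nhds
  have hprod := (hslope.pow 2).mul hpow
  rw [mul_zero] at hprod
  refine hprod.congr' ?_
  filter_upwards [self_mem_nhdsWithin] with x (hx : x < t)
  have htx : 0 < t - x := sub_pos.mpr hx
  have hxt : x - t ≠ 0 := (sub_neg.mpr hx).ne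
  rw [slope_def_field, Real.rpow_add htx, Real.rpow_two, div_pow, ← neg_sq (t - x), neg_sub]
  field_simp

theorem integral_sub_mul_deriv_mul_rpow_nonpos {f f' : ℝ → ℝ} {α a t : ℝ}
    (hα0 : 0 ≤ α) (hα1 : α < 1) (hat : a < t)
    (hf : ∀ s ∈ Icc a t, HasDerivWithinAt f (f' s) (Icc a t) s) (hf' : ContinuousOn f' (Icc a t)) :
    ∫ s in a..t, (f s - f t) * f' s * (t - s) ^ (-α) ≤ 0 := by
  have hfc : ContinuousOn f (Icc a t) := fun s hs => (hf s hs).continuousWithinAt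
  set G : ℝ → ℝ := fun x => ∫ s in a..x, (f s - f t) * f' s * (t - s) ^ (-α)
  have hbound : ∀ x ∈ Ico a t, G x ≤ (f x - f t) ^ 2 * (t - x) ^ (-α) / 2 := by
    intro x ⟨hax, hxt⟩
    have hsub : Icc a x ⊆ Icc a t := Icc_subset_Icc_right hxt.le
    have hpos : ∀ s ∈ Icc a x, 0 < t - s := fun s hs => by linarith [hs.2]
    refine integral_mul_deriv_mul_le_of_deriv_nonneg hax
      (fun s hs => ((hf s (hsub hs)).mono hsub).sub_const (f t))
      ((hf'.mono hsub).intervalIntegrable_of_Icc hax)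
      (fun s hs => (((hasDerivAt_id s).const_sub t).rpow_const
        (Or.inl (hpos s hs).ne')).hasDerivWithinAt)
      (ContinuousOn.intervalIntegrable_of_Icc hax ?_)
      (Real.rpow_nonneg (hpos a ⟨le_rfl, hax⟩).le _) ?_
    · exact continuousOn_const.mul
        ((continuousOn_const.sub continuousOn_id).rpow_const fun s hs => Or.inl (hpos s hs).ne')
    · intro s hs
      simpa using mul_nonneg hα0 (Real.rpow_nonneg (hpos s hs).le (-α - 1))
  have hlim : Tendsto (fun x => (f x - f t) ^ 2 * (t - x) ^ (-α) / 2) (𝓝[<] t) (𝓝 0) := by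
    have hft : HasDerivWithinAt f (f' t) (Iic t) t :=
      (hf t ⟨hat.le, le_rfl⟩).mono_of_mem_nhdsWithin (Icc_mem_nhdsLE hat)
    simpa using (tendsto_sq_sub_mul_rpow_nhdsLT hft (by linarith)).div_const 2
  have hG : ContinuousWithinAt G (Iio t) t := by
    have hint : IntervalIntegrable (fun s => (f s - f t) * f' s * (t - s) ^ (-α)) volume a t :=
      (intervalIntegrable_const_sub_rpow (by linarith) t a t).continuousOn_mul <| by
        rw [uIcc_of_le hat.le]
        exact (hfc.sub continuousOn_const).mul hf'
    refine (continuousOn_primitive_interval' hint left_mem_uIcc t right_mem_uIcc)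
      |>.mono_of_mem_nhdsWithin ?_
    rw [uIcc_of_le hat.le]
    exact mem_of_superset (Ioo_mem_nhdsLT hat) Ioo_subset_Icc_self
  exact le_of_tendsto_of_tendsto hG hlim <| by
    filter_upwards [Ioo_mem_nhdsLT hat] with x hx using hbound x ⟨hx.1.le, hx.2⟩

theorem caputo_product_inequality_general
    (α T : ℝ) (hα0 : 0 < α) (hα1 : α < 1)
    (f f' : ℝ → ℝ)
    (hf : ∀ s ∈ Set.Icc (0:ℝ) T, HasDerivWithinAt f (f' s) (Set.Icc (0:ℝ) T) s)
    (hf' : ContinuousOn f' (Set.Icc (0:ℝ) T)) :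
    ∀ t ∈ Set.Ioc (0:ℝ) T,
      (∫ s in (0:ℝ)..t, f s * f' s * (t - s) ^ (-α)) ≤
        f t * ∫ s in (0:ℝ)..t, f' s * (t - s) ^ (-α) := by
  rintro t ⟨ht0, htT⟩
  have hsub : Icc 0 t ⊆ Icc 0 T := Icc_subset_Icc_right htT
  have hf't : ContinuousOn f' [[0, t]] := uIcc_of_le ht0.le ▸ hf'.mono hsub
  have hft : ContinuousOn f [[0, t]] :=
    uIcc_of_le ht0.le ▸ fun s hs => (hf s (hsub hs)).continuousWithinAt.mono hsub
  have hw := intervalIntegrable_const_sub_rpow (by linarith : -1 < -α) t 0 t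
  have hnonpos := integral_sub_mul_deriv_mul_rpow_nonpos hα0.le hα1 ht0
    (fun s hs => (hf s (hsub hs)).mono hsub) (hf'.mono hsub)
  rw [← intervalIntegral.integral_const_mul, ← sub_nonpos,
    ← intervalIntegral.integral_sub (hw.continuousOn_mul (hft.fun_mul hf't))
      ((hw.continuousOn_mul hf't).const_mul _)]
  exact (integral_congr fun s _ => by ring).trans_le hnonpos

/-- **Alikhanov's inequality** (equivalent form, without the common factor
`1/Γ(1−α)`): for `0 < α < 1` and `f` continuously differentiable on `[0,T]`,
for every `t ∈ (0,T]` one has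
`∫₀^t f(s) f'(s) (t−s)^{−α} ds ≤ f(t) ∫₀^t f'(s) (t−s)^{−α} ds`,
i.e. `f(t) · ᶜD^α_t f(t) ≥ (1/2) ᶜD^α_t (f²)(t)`. -/
theorem caputo_product_inequality
    (α T : ℝ) (hα0 : 0 < α) (hα1 : α < 1) (hT : 0 < T)
    (f f' : ℝ → ℝ)
    (hf : ∀ s ∈ Set.Icc (0:ℝ) T, HasDerivWithinAt f (f' s) (Set.Icc (0:ℝ) T) s)
    (hf' : ContinuousOn f' (Set.Icc (0:ℝ) T)) :
    ∀ t ∈ Set.Ioc (0:ℝ) T,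
      (∫ s in (0:ℝ)..t, f s * f' s * (t - s) ^ (-α)) ≤
        f t * ∫ s in (0:ℝ)..t, f' s * (t - s) ^ (-α) :=
  caputo_product_inequality_general α T hα0 hα1 f f' hf hf'
end

section
/- Let n ≥ 5, 0 < α < 1, 1 ≤ p < n/(n−2), C₀ > 0 and c > 0. There exists a constant C > 0, depending only on n, α, p, C₀, c, such that for every τ > 0 and every measurable function g : ℝⁿ → ℝ satisfying |g(x)| ≤ C₀ τ^{−α−1} |x|^{−(n−2)} whenever 0 < |x| ≤ τ^{α/2}, and |g(x)| ≤ C₀ τ^{−α(n+2)/2−1+α} exp(−c (|x| τ^{−α/2})^{2/(2−α)}) whenever |x| > τ^{α/2}, one has ‖g‖_{L^p(ℝⁿ)} ≤ C τ^{−1 − (αn/2)(1−1/p)}. -/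
/-!
Put `R = τ^{α/2}`. The hypotheses say that
`|g(x)| ≤ C₀ τ^{-α-1} R^{-(n-2)} Ψ(x/R) + C₀ τ^{-α(n+2)/2-1+α} Φ(x/R)` for the fixed profiles
`Ψ(x) = |x|^{-(n-2)} 1_{|x| ≤ 1}` and `Φ(x) = exp(-c|x|^{2/(2-α)})`. Both profiles lie in `L^p`:
in polar coordinates `Ψ^p` becomes `r^{n-1-(n-2)p}` on `(0, 1]`, integrable exactly because
`p < n/(n-2)`, and `Φ^p` is a stretched exponential. Dilation by `R` multiplies `L^p` norms by
`R^{n/p}`, so Minkowski's inequality gives `‖g‖_p ≤ C₀ (‖Ψ‖_p + ‖Φ‖_p) τ^{-1-(αn/2)(1-1/p)}`: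
in both terms the powers of `τ` combine to the same exponent.
-/

open MeasureTheory Measure Set Real Module
open scoped ENNReal

noncomputable def truncatedRpowNeg (a : ℝ) : ℝ → ℝ := (Iic 1).indicator fun r => r ^ (-a)

noncomputable def stretchedExp (c s r : ℝ) : ℝ := exp (-c * r ^ s)

theorem measurable_truncatedRpowNeg (a : ℝ) : Measurable (truncatedRpowNeg a) :=
  (measurable_id.pow_const _).indicator measurableSet_Iic

theorem measurable_stretchedExp (c s : ℝ) : Measurable (stretchedExp c s) := by
  unfold stretchedExp
  fun_prop

theorem truncatedRpowNeg_nonneg (a : ℝ) {r : ℝ} (hr : 0 ≤ r) : 0 ≤ truncatedRpowNeg a r :=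
  indicator_nonneg (fun _ _ => rpow_nonneg hr _) r

theorem rpow_neg_mul_truncatedRpowNeg_inv_mul (a : ℝ) {R r : ℝ} (hR : 0 < R) (hr : 0 ≤ r)
    (hrR : r ≤ R) : R ^ (-a) * truncatedRpowNeg a (R⁻¹ * r) = r ^ (-a) := by
  have hle : R⁻¹ * r ≤ 1 := by rwa [inv_mul_le_iff₀ hR, mul_one]
  rw [truncatedRpowNeg, indicator_of_mem (mem_Iic.2 hle), mul_rpow (inv_nonneg.2 hR.le) hr,
    inv_rpow hR.le, ← mul_assoc, mul_inv_cancel₀ (rpow_pos_of_pos hR _).ne', one_mul]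

theorem eLpNorm_stretchedExp_norm_pos {E : Type*} [NormedAddCommGroup E] [MeasurableSpace E]
    [OpensMeasurableSpace E] (μ : Measure E) [NeZero μ] (c s : ℝ) {p : ℝ≥0∞} (hp : p ≠ 0) :
    0 < eLpNorm (fun x : E => stretchedExp c s ‖x‖) p μ := by
  refine pos_iff_ne_zero.2 fun h => ?_
  rw [eLpNorm_eq_zero_iff (f := fun x : E => stretchedExp c s ‖x‖)
    ((measurable_stretchedExp c s).comp measurable_norm).aestronglyMeasurable hp] at h
  have : (ae μ).NeBot := ae_neBot.2 (NeZero.ne μ)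
  obtain ⟨x, hx⟩ := h.exists
  exact (exp_pos _).ne' hx

theorem two_lt_and_sub_two_mul_lt_of_lt_div {n p : ℝ} (hn : 0 ≤ n) (hp : 0 < p)
    (hpn : p < n / (n - 2)) : 2 < n ∧ (n - 2) * p < n := by
  have hn2 : 2 < n := by
    by_contra! h
    linarith [div_nonpos_of_nonneg_of_nonpos hn (by linarith : n - 2 ≤ 0)]
  exact ⟨hn2, by linarith [(lt_div_iff₀ (by linarith : 0 < n - 2)).1 hpn]⟩

theorem ae_abs_le_truncatedRpowNeg_add_stretchedExp {E : Type*} [NormedAddCommGroup E]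
    [NormedSpace ℝ E] [MeasurableSpace E] (μ : Measure E) [NullSingletonClass μ] {g : E → ℝ}
    {a c s A B R : ℝ} (hA : 0 ≤ A) (hB : 0 ≤ B) (hR : 0 < R)
    (hin : ∀ x : E, 0 < ‖x‖ → ‖x‖ ≤ R → |g x| ≤ A * ‖x‖ ^ (-a))
    (hout : ∀ x : E, R < ‖x‖ → |g x| ≤ B * exp (-c * (‖x‖ * R⁻¹) ^ s)) :
    ∀ᵐ x ∂μ, ‖g x‖ ≤ A * R ^ (-a) * truncatedRpowNeg a ‖R⁻¹ • x‖ +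
      B * stretchedExp c s ‖R⁻¹ • x‖ := by
  filter_upwards [compl_mem_ae_iff.2 (measure_singleton 0)] with x hx
  have hnorm : ‖R⁻¹ • x‖ = R⁻¹ * ‖x‖ := by rw [norm_smul, norm_inv, Real.norm_of_nonneg hR.le]
  have hΨ : 0 ≤ truncatedRpowNeg a ‖R⁻¹ • x‖ := truncatedRpowNeg_nonneg a (norm_nonneg _)
  have hΦ : 0 ≤ stretchedExp c s ‖R⁻¹ • x‖ := (exp_pos _).le
  rw [Real.norm_eq_abs]
  rcases le_or_gt ‖x‖ R with hxR | hxR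
  · calc |g x| ≤ A * ‖x‖ ^ (-a) := hin x (norm_pos_iff.2 hx) hxR
      _ = A * R ^ (-a) * truncatedRpowNeg a ‖R⁻¹ • x‖ := by
        rw [hnorm, mul_assoc, rpow_neg_mul_truncatedRpowNeg_inv_mul a hR (norm_nonneg x) hxR]
      _ ≤ _ := le_add_of_nonneg_right (mul_nonneg hB hΦ)
  · calc |g x| ≤ B * stretchedExp c s ‖R⁻¹ • x‖ := by
          rw [stretchedExp, hnorm, mul_comm R⁻¹]
          exact hout x hxR
      _ ≤ _ := le_add_of_nonneg_left (mul_nonneg (mul_nonneg hA (by positivity)) hΨ)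

section Haar

variable {E : Type*} [NormedAddCommGroup E] [NormedSpace ℝ E] [MeasurableSpace E] [BorelSpace E]
  [FiniteDimensional ℝ E] (μ : Measure E) [μ.IsAddHaarMeasure]

theorem eLpNorm_comp_inv_smul {F : Type*} [NormedAddCommGroup F] {f : E → F}
    (hf : AEStronglyMeasurable f μ) {R : ℝ} (hR : 0 < R) {p : ℝ≥0∞} (hp : p ≠ ∞) :
    eLpNorm (fun x => f (R⁻¹ • x)) p μ =
      ENNReal.ofReal (R ^ ((finrank ℝ E : ℝ) / p.toReal)) * eLpNorm f p μ := by
  have hmap : map (R⁻¹ • ·) μ = ENNReal.ofReal (R ^ finrank ℝ E) • μ := by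
    rw [map_addHaar_smul μ (inv_ne_zero hR.ne'), inv_pow, inv_inv, abs_of_pos (by positivity)]
  have hfmap : AEStronglyMeasurable f (map (R⁻¹ • ·) μ) := hmap ▸ hf.smul_measure _
  rw [← Function.comp_def, ← eLpNorm_map_measure hfmap (measurable_const_smul _).aemeasurable,
    hmap, eLpNorm_smul_measure_of_ne_top hp, smul_eq_mul,
    ENNReal.ofReal_rpow_of_nonneg (by positivity) (by positivity), ← rpow_natCast,
    ← rpow_mul hR.le, one_div, ENNReal.toReal_inv, div_eq_mul_inv]

theorem eLpNorm_le_of_ae_le_add_comp_inv_smul {g F₁ F₂ : E → ℝ} {A B R : ℝ} {p : ℝ≥0∞}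
    (hp1 : 1 ≤ p) (hp : p ≠ ∞) (hA : 0 ≤ A) (hB : 0 ≤ B) (hR : 0 < R)
    (hF₁ : MemLp F₁ p μ) (hF₂ : MemLp F₂ p μ)
    (hg : ∀ᵐ x ∂μ, ‖g x‖ ≤ A * F₁ (R⁻¹ • x) + B * F₂ (R⁻¹ • x)) :
    eLpNorm g p μ ≤ ENNReal.ofReal ((A * (eLpNorm F₁ p μ).toReal + B * (eLpNorm F₂ p μ).toReal) *
      R ^ ((finrank ℝ E : ℝ) / p.toReal)) := by
  have hsmul := quasiMeasurePreserving_smul μ (inv_ne_zero hR.ne')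
  have hN₁ := ENNReal.ofReal_toReal hF₁.eLpNorm_ne_top
  have hN₂ := ENNReal.ofReal_toReal hF₂.eLpNorm_ne_top
  calc eLpNorm g p μ
      ≤ eLpNorm (fun x => A * F₁ (R⁻¹ • x) + B * F₂ (R⁻¹ • x)) p μ := eLpNorm_mono_ae_real hg
    _ ≤ eLpNorm (A • fun x => F₁ (R⁻¹ • x)) p μ + eLpNorm (B • fun x => F₂ (R⁻¹ • x)) p μ :=
        eLpNorm_add_le ((hF₁.1.comp_quasiMeasurePreserving hsmul).const_smul A)
          ((hF₂.1.comp_quasiMeasurePreserving hsmul).const_smul B) hp1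
    _ = ENNReal.ofReal ((A * (eLpNorm F₁ p μ).toReal + B * (eLpNorm F₂ p μ).toReal) *
          R ^ ((finrank ℝ E : ℝ) / p.toReal)) := by
        rw [eLpNorm_const_smul, eLpNorm_const_smul, eLpNorm_comp_inv_smul μ hF₁.1 hR hp,
          eLpNorm_comp_inv_smul μ hF₂.1 hR hp]
        conv_lhs => rw [← hN₁, ← hN₂]
        rw [Real.enorm_eq_ofReal hA, Real.enorm_eq_ofReal hB,
          ← ENNReal.ofReal_mul (by positivity), ← ENNReal.ofReal_mul hA,
          ← ENNReal.ofReal_mul (by positivity), ← ENNReal.ofReal_mul hB,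
          ← ENNReal.ofReal_add (by positivity) (by positivity)]
        ring_nf

variable [Nontrivial E]

theorem memLp_fun_norm_addHaar_iff {f : ℝ → ℝ} (hf : Measurable f) {p : ℝ} (hp : 0 < p) :
    MemLp (fun x : E => f ‖x‖) (ENNReal.ofReal p) μ ↔
      IntegrableOn (fun y : ℝ => y ^ (finrank ℝ E - 1) * |f y| ^ p) (Ioi 0) := by
  rw [← integrable_norm_rpow_iff (f := fun x : E => f ‖x‖)
    (hf.comp measurable_norm).aestronglyMeasurable (by simpa using hp) ENNReal.ofReal_ne_top,
    ENNReal.toReal_ofReal hp.le]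
  simpa only [Real.norm_eq_abs, smul_eq_mul] using
    integrable_fun_norm_addHaar μ (f := fun y => |f y| ^ p)

theorem memLp_truncatedRpowNeg_norm {a p : ℝ} (hp : 0 < p) (hap : a * p < finrank ℝ E) :
    MemLp (fun x : E => truncatedRpowNeg a ‖x‖) (ENNReal.ofReal p) μ := by
  rw [memLp_fun_norm_addHaar_iff μ (measurable_truncatedRpowNeg a) hp]
  have hind : (fun y : ℝ => y ^ (finrank ℝ E - 1) * |truncatedRpowNeg a y| ^ p) =
      (Iic 1).indicator fun y => y ^ (finrank ℝ E - 1) * |y ^ (-a)| ^ p := by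
    ext y
    by_cases hy : y ≤ 1 <;> simp [truncatedRpowNeg, hy, zero_rpow hp.ne']
  have hpow : IntegrableOn (fun y : ℝ => y ^ ((finrank ℝ E : ℝ) - 1 - a * p)) (Ioc 0 1) :=
    (intervalIntegral.intervalIntegrable_rpow' (by linarith)).1
  rw [hind, integrableOn_indicator_iff measurableSet_Iic, inter_comm, Ioi_inter_Iic]
  refine hpow.congr_fun (fun y hy => ?_) measurableSet_Ioc
  rw [abs_of_nonneg (rpow_nonneg hy.1.le _), ← rpow_mul hy.1.le, ← rpow_natCast,
    Nat.cast_pred finrank_pos, ← rpow_add hy.1]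
  ring_nf

theorem memLp_stretchedExp_norm {c s p : ℝ} (hc : 0 < c) (hs : 0 < s) (hp : 0 < p) :
    MemLp (fun x : E => stretchedExp c s ‖x‖) (ENNReal.ofReal p) μ := by
  rw [memLp_fun_norm_addHaar_iff μ (measurable_stretchedExp c s) hp]
  have hdim : -1 < (finrank ℝ E : ℝ) - 1 := by
    linarith [(Nat.cast_pos.2 finrank_pos : (0 : ℝ) < finrank ℝ E)]
  refine (integrableOn_rpow_mul_exp_neg_mul_rpow hdim hs (mul_pos hp hc)).congr_fun
    (fun y hy => ?_) measurableSet_Ioi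
  rw [stretchedExp, abs_of_pos (exp_pos _), ← exp_mul, ← rpow_natCast,
    Nat.cast_pred finrank_pos]
  ring_nf

end Haar

theorem lp_estimate_laplacian_kernel_Y_general
    (n : ℕ) (α p C₀ c : ℝ)
    (hα1 : α < 1)
    (hp1 : 1 ≤ p) (hp2 : p < (n : ℝ) / ((n : ℝ) - 2)) (hC₀ : 0 < C₀) (hc : 0 < c) :
    ∃ C > 0, ∀ τ : ℝ, 0 < τ →
      ∀ g : EuclideanSpace ℝ (Fin n) → ℝ, Measurable g →
      (∀ x : EuclideanSpace ℝ (Fin n), 0 < ‖x‖ → ‖x‖ ≤ τ ^ (α / 2) →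
        |g x| ≤ C₀ * τ ^ (-α - 1) * ‖x‖ ^ (-((n : ℝ) - 2))) →
      (∀ x : EuclideanSpace ℝ (Fin n), τ ^ (α / 2) < ‖x‖ →
        |g x| ≤ C₀ * τ ^ (-(α * ((n : ℝ) + 2) / 2) - 1 + α) *
          Real.exp (-c * (‖x‖ * τ ^ (-(α / 2))) ^ (2 / (2 - α)))) →
      eLpNorm g (ENNReal.ofReal p) volume ≤
        ENNReal.ofReal (C * τ ^ (-1 - (α * (n : ℝ) / 2) * (1 - 1 / p))) := by
  have hp0 : 0 < p := by linarith
  obtain ⟨hn, hnp⟩ := two_lt_and_sub_two_mul_lt_of_lt_div (Nat.cast_nonneg n) hp0 hp2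
  have : NeZero n := ⟨by rintro rfl; norm_num at hn⟩
  set Ψ := fun x : EuclideanSpace ℝ (Fin n) => truncatedRpowNeg ((n : ℝ) - 2) ‖x‖
  set Φ := fun x : EuclideanSpace ℝ (Fin n) => stretchedExp c (2 / (2 - α)) ‖x‖
  have hΨ : MemLp Ψ (ENNReal.ofReal p) volume :=
    memLp_truncatedRpowNeg_norm volume hp0 (by rwa [finrank_euclideanSpace_fin])
  have hΦ : MemLp Φ (ENNReal.ofReal p) volume :=
    memLp_stretchedExp_norm volume hc (div_pos two_pos (by linarith)) hp0
  have hΦpos : 0 < (eLpNorm Φ (ENNReal.ofReal p) volume).toReal := ENNReal.toReal_pos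
    (eLpNorm_stretchedExp_norm_pos volume c _ (by simpa using hp0)).ne' hΦ.eLpNorm_ne_top
  refine ⟨C₀ * ((eLpNorm Ψ (ENNReal.ofReal p) volume).toReal +
    (eLpNorm Φ (ENNReal.ofReal p) volume).toReal), by positivity, fun τ hτ g _ hin hout => ?_⟩
  rw [rpow_neg hτ.le] at hout
  set R := τ ^ (α / 2) with hR_def
  have hR : 0 < R := rpow_pos_of_pos hτ _
  have hA : 0 ≤ C₀ * τ ^ (-α - 1) := by positivity
  have hB : 0 ≤ C₀ * τ ^ (-(α * ((n : ℝ) + 2) / 2) - 1 + α) := by positivity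
  refine (eLpNorm_le_of_ae_le_add_comp_inv_smul volume (ENNReal.one_le_ofReal.2 hp1)
    ENNReal.ofReal_ne_top (by positivity) hB hR hΨ hΦ
    (ae_abs_le_truncatedRpowNeg_add_stretchedExp volume hA hB hR hin hout)).trans_eq ?_
  rw [finrank_euclideanSpace_fin, ENNReal.toReal_ofReal hp0.le, hR_def, ← rpow_mul hτ.le,
    ← rpow_mul hτ.le]
  have hexp₁ : τ ^ (-α - 1) * τ ^ (α / 2 * -((n : ℝ) - 2)) * τ ^ (α / 2 * ((n : ℝ) / p)) =
      τ ^ (-1 - (α * (n : ℝ) / 2) * (1 - 1 / p)) := by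
    rw [← rpow_add hτ, ← rpow_add hτ]; congr 1; field_simp; ring
  have hexp₂ : τ ^ (-(α * ((n : ℝ) + 2) / 2) - 1 + α) * τ ^ (α / 2 * ((n : ℝ) / p)) =
      τ ^ (-1 - (α * (n : ℝ) / 2) * (1 - 1 / p)) := by
    rw [← rpow_add hτ]; congr 1; field_simp; ring
  congr 1
  linear_combination (C₀ * (eLpNorm Ψ (ENNReal.ofReal p) volume).toReal) * hexp₁ +
    (C₀ * (eLpNorm Φ (ENNReal.ofReal p) volume).toReal) * hexp₂

/-- **`L^p` estimate for the second derivatives of the Duhamel kernel `Y_τ`.**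
For `n ≥ 5`, `0 < α < 1`, `1 ≤ p < n/(n−2)`, there is `C > 0` depending only
on `n, α, p, C₀, c` such that any measurable `g` with
`|g(x)| ≤ C₀ τ^{−α−1}|x|^{−(n−2)}` for `0 < |x| ≤ τ^{α/2}` and
`|g(x)| ≤ C₀ τ^{−α(n+2)/2−1+α} exp(−c(|x|τ^{−α/2})^{2/(2−α)})` for
`|x| > τ^{α/2}` satisfies `‖g‖_{L^p} ≤ C τ^{−1−(αn/2)(1−1/p)}`. -/
theorem lp_estimate_laplacian_kernel_Y
    (n : ℕ) (hn : 5 ≤ n) (α p C₀ c : ℝ)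
    (hα0 : 0 < α) (hα1 : α < 1)
    (hp1 : 1 ≤ p) (hp2 : p < (n : ℝ) / ((n : ℝ) - 2)) (hC₀ : 0 < C₀) (hc : 0 < c) :
    ∃ C > 0, ∀ τ : ℝ, 0 < τ →
      ∀ g : EuclideanSpace ℝ (Fin n) → ℝ, Measurable g →
      (∀ x : EuclideanSpace ℝ (Fin n), 0 < ‖x‖ → ‖x‖ ≤ τ ^ (α / 2) →
        |g x| ≤ C₀ * τ ^ (-α - 1) * ‖x‖ ^ (-((n : ℝ) - 2))) →
      (∀ x : EuclideanSpace ℝ (Fin n), τ ^ (α / 2) < ‖x‖ →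
        |g x| ≤ C₀ * τ ^ (-(α * ((n : ℝ) + 2) / 2) - 1 + α) *
          Real.exp (-c * (‖x‖ * τ ^ (-(α / 2))) ^ (2 / (2 - α)))) →
      eLpNorm g (ENNReal.ofReal p) volume ≤
        ENNReal.ofReal (C * τ ^ (-1 - (α * (n : ℝ) / 2) * (1 - 1 / p))) :=
  lp_estimate_laplacian_kernel_Y_general n α p C₀ c hα1 hp1 hp2 hC₀ hc
end
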